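/- Let G be a connected non-bipartite graph and let C be any odd cycle in G. Then Y(G) equals the set of nonnegative integer vectors y on E(G) such that ω_C(y) is odd and ω_W(y) = 0 for every even closed walk W in G, where ω_W(y) := Σ_{i=1}^ℓ (−1)^{i−1} y_{e_i} for a walk W with edge sequence e₁,...,e_ℓ. -/
import Mathlib


open SimpleGraph

/-- Alternating sum `Σ (-1)^(i-1) y_{e_i}` along a list of edges `e₁, e₂, …`. -/
def altSum {V : Type*} (y : Sym2 V → ℤ) : List (Sym2 V) → ℤ
  | [] => 0
  | e :: l => y e - altSum y l

lemma altSum_nil {V : Type*} (y : Sym2 V → ℤ) : altSum y [] = 0 := rfl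

lemma altSum_cons {V : Type*} (y : Sym2 V → ℤ) (e : Sym2 V) (l : List (Sym2 V)) :
    altSum y (e :: l) = y e - altSum y l := rfl

lemma altSum_append {V : Type*} (y : Sym2 V → ℤ) (l₁ l₂ : List (Sym2 V)) :
    altSum y (l₁ ++ l₂) = altSum y l₁ + (-1 : ℤ) ^ l₁.length * altSum y l₂ := by
  induction l₁ with
  | nil => simp [altSum_nil]
  | cons e l ih =>
      simp only [List.cons_append, altSum_cons, ih, List.length_cons, pow_succ]
      ring

lemma altSum_reverse {V : Type*} (y : Sym2 V → ℤ) (l : List (Sym2 V)) :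
    altSum y l.reverse = (-1 : ℤ) ^ (l.length + 1) * altSum y l := by
  induction l with
  | nil => simp [altSum_nil]
  | cons e l ih =>
      rw [List.reverse_cons, altSum_append, ih]
      simp only [altSum_cons, altSum_nil, List.length_reverse, List.length_cons, pow_succ]
      ring

lemma altSum_walk {V : Type*} {G : SimpleGraph V} (y : Sym2 V → ℤ) (x : V → ℤ)
    (hx : ∀ u v, G.Adj u v → y s(u, v) = 1 - x u - x v) :
    ∀ {u v : V} (p : G.Walk u v),
      altSum y p.edges = if Even p.length then x v - x u else 1 - x u - x v := by
  intro u v p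
  induction p with
  | nil => simp [altSum_nil]
  | @cons a b c h p ih =>
      rw [Walk.edges_cons, altSum_cons, ih, hx a b h]
      simp only [Walk.length_cons, Nat.even_add_one]
      by_cases he : Even p.length <;> simp only [he, if_true, if_false, not_true,
        not_false_iff, ite_true, ite_false] <;> ring

/-- in a connected non-bipartite graph `G` with a fixed odd cycle `C`, a
nonnegative integer vector `y` on the edges is a slack vector (`y ∈ Y(G)`) iff
`ω_C(y)` is odd and the alternating sum of `y` along every even closed walk vanishes. -/
theorem stmt11 {V : Type*} (G : SimpleGraph V) (hconn : G.Connected)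
    (hnb : ¬ G.Colorable 2)
    (u₀ : V) (C : G.Walk u₀ u₀) (hC : C.IsCycle) (hCodd : Odd C.length)
    (y : Sym2 V → ℤ) :
    ((∀ e ∈ G.edgeSet, 0 ≤ y e) ∧
        ∃ x : V → ℤ, ∀ u v, G.Adj u v → y s(u, v) = 1 - x u - x v)
      ↔ ((∀ e ∈ G.edgeSet, 0 ≤ y e) ∧ Odd (altSum y C.edges) ∧
        ∀ (u : V) (p : G.Walk u u), Even p.length → altSum y p.edges = 0) := by
  classical
  constructor
  · rintro ⟨h0, x, hx⟩
    refine ⟨h0, ?_, ?_⟩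
    · rw [altSum_walk y x hx C, if_neg (Nat.not_even_iff_odd.mpr hCodd)]
      exact ⟨-x u₀, by ring⟩
    · intro u p hp
      rw [altSum_walk y x hx p, if_pos hp]
      ring
  · rintro ⟨h0, h1, h2⟩
    refine ⟨h0, ?_⟩
    obtain ⟨k, hk⟩ := h1
    set a := altSum y C.edges with ha
    have hCne : ¬ Even C.length := Nat.not_even_iff_odd.mpr hCodd
    -- alternating sum along `p.append q.reverse`
    have hPQ : ∀ (v : V) (p q : G.Walk u₀ v),
        altSum y (p.append q.reverse).edges
          = altSum y p.edges
            + (-1 : ℤ) ^ p.length * ((-1 : ℤ) ^ (q.length + 1) * altSum y q.edges) := by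
      intro v p q
      rw [Walk.edges_append, altSum_append, Walk.edges_reverse, altSum_reverse,
        Walk.length_edges, Walk.length_edges]
    -- two walks of the same parity have the same alternating sum
    have key_same : ∀ (v : V) (p q : G.Walk u₀ v),
        (Even p.length ↔ Even q.length) → altSum y p.edges = altSum y q.edges := by
      intro v p q hpar
      have hev : Even (p.append q.reverse).length := by
        rw [Walk.length_append, Walk.length_reverse]
        exact Nat.even_add.mpr hpar
      have hW := h2 u₀ (p.append q.reverse) hev
      rw [hPQ] at hW
      by_cases he : Even p.length
      · have heq : Even q.length := hpar.mp he
        rw [he.neg_one_pow, (by simpa using heq.add_one : Odd (q.length + 1)).neg_one_pow]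
          at hW
        linarith
      · have hop : Odd p.length := Nat.not_even_iff_odd.mp he
        have hoq : Odd q.length := Nat.not_even_iff_odd.mp (fun h => he (hpar.mpr h))
        rw [hop.neg_one_pow, (by simpa using hoq.add_one : Even (q.length + 1)).neg_one_pow]
          at hW
        linarith
    -- walks of opposite parity: alternating sums add up to `a`
    have key_diff : ∀ (v : V) (p q : G.Walk u₀ v),
        Even p.length → ¬ Even q.length →
        altSum y p.edges + altSum y q.edges = a := by
      intro v p q hep hoq'
      have hoq : Odd q.length := Nat.not_even_iff_odd.mp hoq'
      have hev : Even (C.append (p.append q.reverse)).length := by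
        rw [Walk.length_append, Walk.length_append, Walk.length_reverse]
        have : Odd (p.length + q.length) := hep.add_odd hoq
        exact hCodd.add_odd this
      have hW := h2 u₀ (C.append (p.append q.reverse)) hev
      rw [Walk.edges_append, altSum_append, Walk.length_edges, hPQ, hCodd.neg_one_pow,
        hep.neg_one_pow, (by simpa using hoq.add_one : Even (q.length + 1)).neg_one_pow]
        at hW
      rw [← ha] at hW
      linarith
    -- choose a walk from `u₀` to each vertex
    let P : ∀ v, G.Walk u₀ v := fun v => (hconn u₀ v).some
    refine ⟨fun v => if Even (P v).length then altSum y (P v).edges - k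
      else (k + 1) - altSum y (P v).edges, ?_⟩
    intro u v huv
    -- the walk to `u` extended by the edge `uv`
    set r : G.Walk u₀ v := (P u).concat huv with hr
    have hrlen : r.length = (P u).length + 1 := Walk.length_concat _ _
    have hrsum : altSum y r.edges
        = altSum y (P u).edges + (-1 : ℤ) ^ (P u).length * y s(u, v) := by
      rw [hr, Walk.edges_concat, List.concat_eq_append, altSum_append, Walk.length_edges, altSum_cons, altSum_nil]
      ring
    by_cases heu : Even (P u).length <;> by_cases hev : Even (P v).length <;>
      simp only [heu, hev, if_true, if_false, ite_true, ite_false]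
    · -- both even: r is odd, pair with P v via key_diff
      have hro : ¬ Even r.length := by
        rw [hrlen, Nat.even_add_one]; simpa using heu
      have h := key_diff v (P v) r hev hro
      rw [hrsum, heu.neg_one_pow] at h
      linarith
    · -- P u even, P v odd : r odd, same parity as P v
      have hro : ¬ Even r.length := by
        rw [hrlen, Nat.even_add_one]; simpa using heu
      have h := key_same v r (P v) (by simp [hro, hev])
      rw [hrsum, heu.neg_one_pow] at h
      linarith
    · -- P u odd, P v even : r even, same parity as P v
      have hre : Even r.length := by
        rw [hrlen, Nat.even_add_one]; simpa using heu
      have h := key_same v r (P v) (by simp [hre, hev])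
      have hou : Odd (P u).length := Nat.not_even_iff_odd.mp heu
      rw [hrsum, hou.neg_one_pow] at h
      linarith
    · -- both odd : r even, pair with P v via key_diff
      have hre : Even r.length := by
        rw [hrlen, Nat.even_add_one]; simpa using heu
      have h := key_diff v r (P v) hre hev
      have hou : Odd (P u).length := Nat.not_even_iff_odd.mp heu
      rw [hrsum, hou.neg_one_pow] at h
      linarith
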